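/- Assume the Setup (Section 2) with conditions (sing), (main0), (main1), suppose T has a unitary asymptote (X_T, U), and suppose (xxnxxn1): sup_{n≥0} ‖X_n‖‖X_n⁻¹‖ < ∞. Set δ_n = inf{‖X_T x‖/‖x‖ : 0 ≠ x ∈ H_n}. Then inf_{n≥0} δ_n ‖Q_n‖ > 0. -/

import Mathlib

/-!
Put `Y_n = X_n Q_n`. Since `Q_n` commutes with `T`, `Y_n` intertwines `T` with `U_{0n}`, so the
universal property factors it as `Y_n = Z_n X_T` with `Z_n U = U_{0n} Z_n`. For `x ∈ H_n` this gives
`‖x‖ ≤ ‖X_n⁻¹‖ ‖Z_n‖ ‖X_T x‖`, and everything reduces to a uniform bound `‖Z_n‖ ≤ C ‖Z_n X_T‖`.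

If that bound failed along a sequence `n_m` with `‖Z_{n_m}‖ > 4^m ‖Z_{n_m} X_T‖`, the series
`∑_m 2^{-m} Z_{n_m}^* Z_{n_m} X_T / (‖Z_{n_m}‖ ‖Z_{n_m} X_T‖)` would converge in norm and intertwine
`T` with `U`, hence equal `Z' X_T` for some `Z'` commuting with `U`. By (sing), `Z_k Z_n^* = 0` for
`k ≠ n`, so uniqueness in the universal property gives `Z_{n_m} Z' = c_m Z_{n_m} Z_{n_m}^* Z_{n_m}`,
and `‖Z Z^* Z‖ = ‖Z‖³` then forces `‖Z'‖ > 2^m` for every `m`.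
-/

noncomputable section
set_option linter.unusedSectionVars false
open scoped ENNReal InnerProductSpace
open ContinuousLinearMap

/-- A bounded operator `V` is an isometry. -/
def IsIsometryOp {K : Type} [NormedAddCommGroup K] [InnerProductSpace ℂ K]
    (V : K →L[ℂ] K) : Prop :=
  ∀ x, ‖V x‖ = ‖x‖

/-- A bounded operator `V` is unitary: an isometry onto. -/
def IsUnitaryOp {K : Type} [NormedAddCommGroup K] [InnerProductSpace ℂ K]
    (V : K →L[ℂ] K) : Prop :=
  (∀ x, ‖V x‖ = ‖x‖) ∧ Function.Surjective V

/-- `(X, U)` is a unitary asymptote of `T`: `U` is unitary, `X` intertwines `T` with `U`,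
the pair is minimal (`⋁_{n ≥ 0} U^{-n} X H = K`), and it has the universal property with
respect to every pair `(Y, W)` with `W` unitary on a Hilbert space and `Y T = W Y`. -/
def IsUnitaryAsymptote {H : Type} [NormedAddCommGroup H] [InnerProductSpace ℂ H]
    [CompleteSpace H] (T : H →L[ℂ] H)
    (K : Type) [NormedAddCommGroup K] [InnerProductSpace ℂ K] [CompleteSpace K]
    (X : H →L[ℂ] K) (U : K →L[ℂ] K) : Prop :=
  IsUnitaryOp U ∧ X.comp T = U.comp X ∧
    (Submodule.span ℂ (⋃ n : ℕ, ⇑(U ^ n) ⁻¹' Set.range X)).topologicalClosure = ⊤ ∧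
    ∀ (K' : Type) [NormedAddCommGroup K'] [InnerProductSpace ℂ K'] [CompleteSpace K']
      (W : K' →L[ℂ] K') (Y : H →L[ℂ] K'), IsUnitaryOp W → Y.comp T = W.comp Y →
      ∃! Z : K →L[ℂ] K', Z.comp U = W.comp Z ∧ Y = Z.comp X

open scoped InnerProduct

theorem Module.End.iSup_mem_invtSubmodule {R M : Type*} [Semiring R] [AddCommMonoid M]
    [Module R M] {ι : Sort*} {f : Module.End R M} {p : ι → Submodule R M}
    (h : ∀ i, p i ∈ f.invtSubmodule) : ⨆ i, p i ∈ f.invtSubmodule :=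
  iSup_le fun i => (h i).trans (Submodule.comap_mono (le_iSup p i))

theorem ContinuousLinearMap.commute_of_sup_eq_top {R M : Type*} [Semiring R] [AddCommMonoid M]
    [TopologicalSpace M] [Module R M] {P f : M →L[R] M} {p q : Submodule R M}
    (hpq : p ⊔ q = ⊤) (hPp : ∀ x ∈ p, P x = x) (hPq : ∀ x ∈ q, P x = 0)
    (hp : ∀ x ∈ p, f x ∈ p) (hq : ∀ x ∈ q, f x ∈ q) : Commute P f := by
  ext x
  obtain ⟨y, hy, z, hz, rfl⟩ := Submodule.mem_sup.1 (hpq ▸ Submodule.mem_top : x ∈ p ⊔ q)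
  simp [hPp y hy, hPq z hz, hPp _ (hp y hy), hPq _ (hq z hz)]

theorem ContinuousLinearMap.norm_codRestrict_le {𝕜 E F : Type*} [NontriviallyNormedField 𝕜]
    [SeminormedAddCommGroup E] [NormedSpace 𝕜 E] [SeminormedAddCommGroup F] [NormedSpace 𝕜 F]
    (f : E →L[𝕜] F) (p : Submodule 𝕜 F) (h : ∀ x, f x ∈ p) : ‖f.codRestrict p h‖ ≤ ‖f‖ :=
  opNorm_le_bound _ (norm_nonneg f) f.le_opNorm

theorem norm_le_of_comp_codRestrict_eq {𝕜 H F K : Type*} [NontriviallyNormedField 𝕜]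
    [NormedAddCommGroup H] [NormedSpace 𝕜 H] [NormedAddCommGroup F] [NormedSpace 𝕜 F]
    [NormedAddCommGroup K] [NormedSpace 𝕜 K] {p : Submodule 𝕜 H} (e : p ≃L[𝕜] F)
    {P : H →L[𝕜] H} (hPmem : ∀ x, P x ∈ p) (hPid : ∀ x ∈ p, P x = x) {X : H →L[𝕜] K}
    {Z : K →L[𝕜] F} (hZ : (e : p →L[𝕜] F) ∘L P.codRestrict p hPmem = Z ∘L X) {C : ℝ} (hC₀ : 0 ≤ C)
    (hC : ‖Z‖ ≤ C * ‖Z ∘L X‖) {x : H} (hx : x ∈ p) :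
    ‖x‖ ≤ C * (‖(e : p →L[𝕜] F)‖ * ‖(e.symm : F →L[𝕜] p)‖) * (‖X x‖ * ‖P‖) := by
  have hZx : Z (X x) = e ⟨x, hx⟩ := by
    rw [← comp_apply, ← hZ]
    exact congrArg e (Subtype.ext (hPid x hx))
  have hZX : ‖Z ∘L X‖ ≤ ‖(e : p →L[𝕜] F)‖ * ‖P‖ := by
    rw [← hZ]
    exact (opNorm_comp_le _ _).trans (by gcongr; exact norm_codRestrict_le _ _ _)
  calc ‖x‖ ≤ ‖(e.symm : F →L[𝕜] p)‖ * ‖Z (X x)‖ := by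
        simpa [hZx] using (e.symm : F →L[𝕜] p).le_opNorm (e ⟨x, hx⟩)
    _ ≤ ‖(e.symm : F →L[𝕜] p)‖ * (C * (‖(e : p →L[𝕜] F)‖ * ‖P‖) * ‖X x‖) := by
        gcongr
        exact (Z.le_opNorm _).trans (by gcongr; exact hC.trans (by gcongr))
    _ = C * (‖(e : p →L[𝕜] F)‖ * ‖(e.symm : F →L[𝕜] p)‖) * (‖X x‖ * ‖P‖) := by ring

section Intertwining

variable {E F G : Type*} [NormedAddCommGroup E] [NormedSpace ℂ E] [NormedAddCommGroup F]
  [NormedSpace ℂ F] [NormedAddCommGroup G] [NormedSpace ℂ G]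

def Intertwines (A : E →L[ℂ] F) (S : E →L[ℂ] E) (R : F →L[ℂ] F) : Prop :=
  A ∘L S = R ∘L A

variable {A : E →L[ℂ] F} {S : E →L[ℂ] E} {R : F →L[ℂ] F}

theorem Intertwines.comp {B : F →L[ℂ] G} {P : G →L[ℂ] G} (hB : Intertwines B R P)
    (hA : Intertwines A S R) : Intertwines (B ∘L A) S P := by
  rw [Intertwines, comp_assoc, hA, ← comp_assoc, hB, comp_assoc]

theorem Intertwines.smul (h : Intertwines A S R) (c : ℝ) : Intertwines (c • A) S R := by
  rw [Intertwines, smul_comp, comp_smul, h]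

theorem Intertwines.tsum {ι : Type*} {A : ι → E →L[ℂ] F} (hA : Summable A)
    (h : ∀ i, Intertwines (A i) S R) : Intertwines (∑' i, A i) S R := by
  have hleft := ((compL ℂ E E F).flip S).map_tsum hA
  have hright := (compL ℂ E F F R).map_tsum hA
  simp only [flip_apply, compL_apply] at hleft hright
  rw [Intertwines, hleft, hright]
  exact tsum_congr h

end Intertwining

section Adjoint

variable {E F : Type} [NormedAddCommGroup E] [InnerProductSpace ℂ E] [CompleteSpace E]
  [NormedAddCommGroup F] [InnerProductSpace ℂ F] [CompleteSpace F]

theorem IsUnitaryOp.adjoint_comp_self {U : E →L[ℂ] E} (hU : IsUnitaryOp U) : U† ∘L U = 1 :=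
  (norm_map_iff_adjoint_comp_self U).1 hU.1

theorem IsUnitaryOp.comp_adjoint_self {U : E →L[ℂ] E} (hU : IsUnitaryOp U) : U ∘L U† = 1 := by
  ext x
  obtain ⟨y, rfl⟩ := hU.2 x
  simpa using congrArg U (congrFun (congrArg DFunLike.coe hU.adjoint_comp_self) y)

theorem Intertwines.adjoint {A : E →L[ℂ] F} {S : E →L[ℂ] E} {R : F →L[ℂ] F}
    (hS : IsUnitaryOp S) (hR : IsUnitaryOp R) (h : Intertwines A S R) : Intertwines (A†) R S := by
  have h' : S† ∘L A† = A† ∘L R† := by rw [← adjoint_comp, ← adjoint_comp, h]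
  calc A† ∘L R = (S ∘L S†) ∘L A† ∘L R := by rw [hS.comp_adjoint_self, one_def, id_comp]
    _ = S ∘L (S† ∘L A†) ∘L R := by simp only [comp_assoc]
    _ = S ∘L A† := by rw [h', comp_assoc, hR.adjoint_comp_self, one_def, comp_id]

theorem norm_pow_three_le_norm_comp_adjoint_comp (A : E →L[ℂ] F) :
    ‖A‖ ^ 3 ≤ ‖A ∘L A† ∘L A‖ := by
  have h : ‖A‖ * ‖A‖ ^ 3 ≤ ‖A‖ * ‖A ∘L A† ∘L A‖ := calc
    ‖A‖ * ‖A‖ ^ 3 = ‖(A† ∘L A)† ∘L (A† ∘L A)‖ := by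
      rw [norm_adjoint_comp_self, norm_adjoint_comp_self]; ring
    _ = ‖A† ∘L A ∘L A† ∘L A‖ := by rw [adjoint_comp, adjoint_adjoint, comp_assoc]
    _ ≤ ‖A‖ * ‖A ∘L A† ∘L A‖ := by
      simpa only [adjoint.norm_map] using opNorm_comp_le (A†) (A ∘L A† ∘L A)
  rcases (norm_nonneg A).eq_or_lt with h0 | hpos
  · simp [← h0]
  · exact le_of_mul_le_mul_left h hpos

end Adjoint

namespace IsUnitaryAsymptote

variable {H K : Type} [NormedAddCommGroup H] [InnerProductSpace ℂ H] [CompleteSpace H]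
  [NormedAddCommGroup K] [InnerProductSpace ℂ K] [CompleteSpace K]
  {T : H →L[ℂ] H} {X : H →L[ℂ] K} {U : K →L[ℂ] K}

theorem ext (hXU : IsUnitaryAsymptote T K X U) {K' : Type} [NormedAddCommGroup K']
    [InnerProductSpace ℂ K'] [CompleteSpace K'] {W : K' →L[ℂ] K'} (hW : IsUnitaryOp W)
    {Z₁ Z₂ : K →L[ℂ] K'} (h₁ : Intertwines Z₁ U W) (h₂ : Intertwines Z₂ U W)
    (h : Z₁ ∘L X = Z₂ ∘L X) : Z₁ = Z₂ :=
  (hXU.2.2.2 K' W (Z₁ ∘L X) hW (h₁.comp hXU.2.1)).unique ⟨h₁, rfl⟩ ⟨h₂, h⟩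

theorem mul_norm_pow_three_le (hXU : IsUnitaryAsymptote T K X U) {K' : Type}
    [NormedAddCommGroup K'] [InnerProductSpace ℂ K'] [CompleteSpace K'] {W : K' →L[ℂ] K'}
    (hW : IsUnitaryOp W) {Z : K →L[ℂ] K'} {Z' : K →L[ℂ] K} (hZ : Intertwines Z U W)
    (hZ' : Intertwines Z' U U) {c : ℝ} (hc : 0 ≤ c)
    (h : Z ∘L Z' ∘L X = c • Z ∘L Z† ∘L Z ∘L X) : c * ‖Z‖ ^ 3 ≤ ‖Z‖ * ‖Z'‖ := by
  have hZZ' : Z ∘L Z' = c • (Z ∘L Z† ∘L Z) :=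
    hXU.ext hW (hZ.comp hZ') ((hZ.comp ((hZ.adjoint hXU.1 hW).comp hZ)).smul c)
      (by simp only [smul_comp, comp_assoc, h])
  calc c * ‖Z‖ ^ 3 ≤ c * ‖Z ∘L Z† ∘L Z‖ := by
        gcongr; exact norm_pow_three_le_norm_comp_adjoint_comp Z
    _ = ‖Z ∘L Z'‖ := by rw [hZZ', norm_smul, Real.norm_of_nonneg hc]
    _ ≤ ‖Z‖ * ‖Z'‖ := opNorm_comp_le _ _

variable {K₀ : ℕ → Type} [∀ n, NormedAddCommGroup (K₀ n)] [∀ n, InnerProductSpace ℂ (K₀ n)]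
  [∀ n, CompleteSpace (K₀ n)] {U₀ : ∀ n, K₀ n →L[ℂ] K₀ n} {Z : ∀ n, K →L[ℂ] K₀ n}

theorem exists_norm_div_norm_comp_le_pow_four (hXU : IsUnitaryAsymptote T K X U)
    (hU₀ : ∀ n, IsUnitaryOp (U₀ n))
    (hsing : ∀ n k, n ≠ k → ∀ A : K₀ n →L[ℂ] K₀ k, Intertwines A (U₀ n) (U₀ k) → A = 0)
    (hZ : ∀ n, Intertwines (Z n) U (U₀ n)) {g : ℕ → ℕ} (hg : g.Injective) :
    ∃ m, ‖Z (g m)‖ / ‖Z (g m) ∘L X‖ ≤ 4 ^ m := by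
  by_contra! hlarge
  set c : ℕ → ℝ := fun j => 2⁻¹ ^ j * (‖Z (g j)‖ * ‖Z (g j) ∘L X‖)⁻¹
  set S : ℕ → H →L[ℂ] K := fun j => c j • (Z (g j))† ∘L Z (g j) ∘L X
  have hS_norm : ∀ j, ‖S j‖ ≤ 2⁻¹ ^ j := fun j => by
    have hj : ‖(Z (g j))† ∘L Z (g j) ∘L X‖ ≤ ‖Z (g j)‖ * ‖Z (g j) ∘L X‖ := by
      simpa only [adjoint.norm_map] using opNorm_comp_le ((Z (g j))†) (Z (g j) ∘L X)
    calc ‖S j‖ = 2⁻¹ ^ j * ((‖Z (g j)‖ * ‖Z (g j) ∘L X‖)⁻¹ * ‖(Z (g j))† ∘L Z (g j) ∘L X‖) := by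
          rw [norm_smul, Real.norm_of_nonneg (by positivity), mul_assoc]
      _ ≤ 2⁻¹ ^ j :=
          mul_le_of_le_one_right (by positivity) (inv_mul_le_one_of_le₀ hj (by positivity))
  have hS : Summable S :=
    .of_norm_bounded (summable_geometric_of_lt_one (by norm_num) (by norm_num)) hS_norm
  obtain ⟨Z', ⟨hZ', hZ'X⟩, -⟩ := hXU.2.2.2 K U (∑' j, S j) hXU.1 <| Intertwines.tsum hS fun j =>
    (((hZ (g j)).adjoint hXU.1 (hU₀ _)).comp ((hZ (g j)).comp hXU.2.1)).smul (c j)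
  obtain ⟨m, hm⟩ := pow_unbounded_of_one_lt ‖Z'‖ one_lt_two
  have hcollapse : Z (g m) ∘L Z' ∘L X = c m • Z (g m) ∘L (Z (g m))† ∘L Z (g m) ∘L X := by
    have hmap := (compL ℂ H K (K₀ (g m)) (Z (g m))).map_tsum hS
    simp only [compL_apply] at hmap
    rw [← hZ'X, hmap, tsum_eq_single m fun j hj => ?_, comp_smul]
    rw [comp_smul, ← comp_assoc, hsing (g j) (g m) (hg.ne hj) _
      ((hZ (g m)).comp ((hZ (g j)).adjoint hXU.1 (hU₀ _))), zero_comp, smul_zero]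
  have hbound := hXU.mul_norm_pow_three_le (hU₀ _) (hZ (g m)) hZ' (by positivity) hcollapse
  obtain ⟨ha, hb⟩ : 0 < ‖Z (g m)‖ ∧ 0 < ‖Z (g m) ∘L X‖ :=
    (div_pos_iff.1 ((pow_pos (by norm_num) m).trans (hlarge m))).resolve_right
      fun h => (norm_nonneg _).not_gt h.1
  have hkey : 2⁻¹ ^ m * (‖Z (g m)‖ / ‖Z (g m) ∘L X‖) ≤ ‖Z'‖ := by
    refine le_of_mul_le_mul_left (le_of_eq_of_le ?_ hbound) ha
    simp only [c]
    field_simp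
  have hpow : (2 : ℝ) ^ m < 2⁻¹ ^ m * (‖Z (g m)‖ / ‖Z (g m) ∘L X‖) :=
    calc (2 : ℝ) ^ m = 2⁻¹ ^ m * 4 ^ m := by rw [← mul_pow]; norm_num
      _ < _ := mul_lt_mul_of_pos_left (hlarge m) (by positivity)
  linarith

theorem exists_norm_le_mul_norm_comp (hXU : IsUnitaryAsymptote T K X U)
    (hU₀ : ∀ n, IsUnitaryOp (U₀ n))
    (hsing : ∀ n k, n ≠ k → ∀ A : K₀ n →L[ℂ] K₀ k, Intertwines A (U₀ n) (U₀ k) → A = 0)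
    (hZ : ∀ n, Intertwines (Z n) U (U₀ n)) :
    ∃ C, 0 < C ∧ ∀ n, ‖Z n‖ ≤ C * ‖Z n ∘L X‖ := by
  have hbdd : BddAbove (Set.range fun n => ‖Z n‖ / ‖Z n ∘L X‖) := by
    by_contra hunbdd
    have hfreq : ∀ m, ∃ᶠ n in Filter.atTop, (4 : ℝ) ^ m < ‖Z n‖ / ‖Z n ∘L X‖ := fun m => by
      contrapose! hunbdd
      exact Filter.IsBoundedUnder.bddAbove_range ⟨4 ^ m, hunbdd⟩
    obtain ⟨g, hg, hlarge⟩ := Filter.extraction_forall_of_frequently hfreq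
    obtain ⟨m, hm⟩ := hXU.exists_norm_div_norm_comp_le_pow_four hU₀ hsing hZ hg.injective
    exact (hlarge m).not_ge hm
  obtain ⟨C, hC⟩ := hbdd
  refine ⟨max C 1, by positivity, fun n => ?_⟩
  rcases (norm_nonneg (Z n ∘L X)).eq_or_lt with h0 | hpos
  · have hZn : Z n = 0 := hXU.ext (hU₀ n) (hZ n) (by simp [Intertwines])
      (by rw [zero_comp, ← norm_eq_zero, h0])
    simp [hZn]
  · rw [← div_le_iff₀ hpos]
    exact (hC ⟨n, rfl⟩).trans (le_max_left _ _)

end IsUnitaryAsymptote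

theorem unitary_asymptote_lower_bound_general
    {H : Type} [NormedAddCommGroup H] [InnerProductSpace ℂ H] [CompleteSpace H]
    (K0 : ℕ → Type) [∀ n, NormedAddCommGroup (K0 n)] [∀ n, InnerProductSpace ℂ (K0 n)]
    [∀ n, CompleteSpace (K0 n)]
    -- the unitaries `U_{0n}`, each reductive, with pairwise singular spectral measures:
    (U0 : ∀ n, K0 n →L[ℂ] K0 n)
    (hU0 : ∀ n, IsUnitaryOp (U0 n))
    (hsing : ∀ n k, n ≠ k → ∀ Z : K0 n →L[ℂ] K0 k, Z.comp (U0 n) = (U0 k).comp Z → Z = 0)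
    (T : H →L[ℂ] H)
    -- the nonzero closed `T`-invariant subspaces `H_n`:
    (Hn : ℕ → Submodule ℂ H)
    (hTH : ∀ n, ∀ x ∈ Hn n, T x ∈ Hn n)
    -- `Vn n = ⋁_{k ≠ n} H_k`:
    (Vn : ℕ → Submodule ℂ H)
    (hVn : ∀ n, Vn n = (⨆ k ∈ {k : ℕ | k ≠ n}, Hn k).topologicalClosure)
    -- (main0):
    (hmain0 : ∀ n, Hn n ⊓ Vn n = ⊥ ∧ Hn n ⊔ Vn n = ⊤)
    -- (main1): the invertible intertwiners `X_n : H_n → K_{0n}`: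
    (X0 : ∀ n, ↥(Hn n) ≃L[ℂ] K0 n)
    (hX0 : ∀ (n) (x : ↥(Hn n)), X0 n ⟨T ↑x, hTH n ↑x x.2⟩ = U0 n (X0 n x))
    -- the skew projections `Q_n` onto `H_n` along `⋁_{k ≠ n} H_k`:
    (Q : ℕ → H →L[ℂ] H)
    (hQmem : ∀ n x, Q n x ∈ Hn n)
    (hQid : ∀ n, ∀ x ∈ Hn n, Q n x = x)
    (hQker : ∀ n, ∀ x ∈ Vn n, Q n x = 0)
    -- (xxnxxn1):
    (hXX : ∃ C : ℝ, ∀ n,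
      ‖(X0 n : ↥(Hn n) →L[ℂ] K0 n)‖ * ‖((X0 n).symm : K0 n →L[ℂ] ↥(Hn n))‖ ≤ C)
    -- a unitary asymptote `(X_T, Uu)` of `T`:
    {K : Type} [NormedAddCommGroup K] [InnerProductSpace ℂ K] [CompleteSpace K]
    (XT : H →L[ℂ] K) (Uu : K →L[ℂ] K)
    (hasym : IsUnitaryAsymptote T K XT Uu) :
    ∃ ε : ℝ, 0 < ε ∧ ∀ n, ∀ x ∈ Hn n, ε * ‖x‖ ≤ ‖XT x‖ * ‖Q n‖ := by
  have hQT (n : ℕ) : Commute (Q n) T := by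
    refine commute_of_sup_eq_top (hmain0 n).2 (hQid n) (hQker n) (hTH n) ?_
    rw [hVn n]
    exact Submodule.topologicalClosure_mem_invtSubmodule <|
      Module.End.iSup_mem_invtSubmodule fun k => Module.End.iSup_mem_invtSubmodule fun _ => hTH k
  let Y (n : ℕ) : H →L[ℂ] K0 n := (X0 n : Hn n →L[ℂ] K0 n) ∘L (Q n).codRestrict (Hn n) (hQmem n)
  have hY (n : ℕ) : Intertwines (Y n) T (U0 n) := by
    ext x
    have hQx : (Q n).codRestrict (Hn n) (hQmem n) (T x) = ⟨T (Q n x), hTH n _ (hQmem n x)⟩ :=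
      Subtype.ext <| show Q n (T x) = T (Q n x) from DFunLike.congr_fun (hQT n).eq x
    exact (congrArg (X0 n) hQx).trans (hX0 n ((Q n).codRestrict (Hn n) (hQmem n) x))
  choose Z hZ hYZ using fun n => (hasym.2.2.2 (K0 n) (U0 n) (Y n) (hU0 n) (hY n)).exists
  obtain ⟨C₁, hC₁, hZY⟩ := hasym.exists_norm_le_mul_norm_comp hU0 hsing hZ
  obtain ⟨C, hC⟩ := hXX
  refine ⟨(C₁ * max C 1)⁻¹, by positivity, fun n x hx => ?_⟩
  rw [inv_mul_le_iff₀ (by positivity)]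
  refine (norm_le_of_comp_codRestrict_eq (X0 n) (hQmem n) (hQid n) (hYZ n) hC₁.le (hZY n)
    hx).trans ?_
  gcongr
  exact (hC n).trans (le_max_left _ _)

/-- Theorem 2.4: if `T` has a unitary asymptote `(X_T, U)` and `sup_n ‖X_n‖‖X_n⁻¹‖ < ∞`,
then `inf_n δ_n ‖Q_n‖ > 0`. -/
theorem unitary_asymptote_lower_bound
    {H : Type} [NormedAddCommGroup H] [InnerProductSpace ℂ H] [CompleteSpace H]
    [TopologicalSpace.SeparableSpace H]
    (K0 : ℕ → Type) [∀ n, NormedAddCommGroup (K0 n)] [∀ n, InnerProductSpace ℂ (K0 n)]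
    [∀ n, CompleteSpace (K0 n)] [∀ n, TopologicalSpace.SeparableSpace (K0 n)]
    -- the unitaries `U_{0n}`, each reductive, with pairwise singular spectral measures:
    (U0 : ∀ n, K0 n →L[ℂ] K0 n)
    (hU0 : ∀ n, IsUnitaryOp (U0 n))
    (hU0red : ∀ (n) (F : Submodule ℂ (K0 n)), IsClosed (F : Set (K0 n)) →
      (∀ x ∈ F, U0 n x ∈ F) → ∀ x ∈ F, ContinuousLinearMap.adjoint (U0 n) x ∈ F)
    (hsing : ∀ n k, n ≠ k → ∀ Z : K0 n →L[ℂ] K0 k, Z.comp (U0 n) = (U0 k).comp Z → Z = 0)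
    (T : H →L[ℂ] H)
    -- the nonzero closed `T`-invariant subspaces `H_n`:
    (Hn : ℕ → Submodule ℂ H)
    (hHcl : ∀ n, IsClosed ((Hn n : Set H)))
    (hHne : ∀ n, Hn n ≠ ⊥)
    (hTH : ∀ n, ∀ x ∈ Hn n, T x ∈ Hn n)
    -- `Vn n = ⋁_{k ≠ n} H_k`:
    (Vn : ℕ → Submodule ℂ H)
    (hVn : ∀ n, Vn n = (⨆ k ∈ {k : ℕ | k ≠ n}, Hn k).topologicalClosure)
    -- (main0):
    (hmain0 : ∀ n, Hn n ⊓ Vn n = ⊥ ∧ Hn n ⊔ Vn n = ⊤)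
    -- (main1): the invertible intertwiners `X_n : H_n → K_{0n}`:
    (X0 : ∀ n, ↥(Hn n) ≃L[ℂ] K0 n)
    (hX0 : ∀ (n) (x : ↥(Hn n)), X0 n ⟨T ↑x, hTH n ↑x x.2⟩ = U0 n (X0 n x))
    -- the skew projections `Q_n` onto `H_n` along `⋁_{k ≠ n} H_k`:
    (Q : ℕ → H →L[ℂ] H)
    (hQmem : ∀ n x, Q n x ∈ Hn n)
    (hQid : ∀ n, ∀ x ∈ Hn n, Q n x = x)
    (hQker : ∀ n, ∀ x ∈ Vn n, Q n x = 0)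
    -- (xxnxxn1):
    (hXX : ∃ C : ℝ, ∀ n,
      ‖(X0 n : ↥(Hn n) →L[ℂ] K0 n)‖ * ‖((X0 n).symm : K0 n →L[ℂ] ↥(Hn n))‖ ≤ C)
    -- a unitary asymptote `(X_T, Uu)` of `T`:
    {K : Type} [NormedAddCommGroup K] [InnerProductSpace ℂ K] [CompleteSpace K]
    (XT : H →L[ℂ] K) (Uu : K →L[ℂ] K)
    (hasym : IsUnitaryAsymptote T K XT Uu) :
    ∃ ε : ℝ, 0 < ε ∧ ∀ n, ∀ x ∈ Hn n, ε * ‖x‖ ≤ ‖XT x‖ * ‖Q n‖ :=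
  unitary_asymptote_lower_bound_general K0 U0 hU0 hsing T Hn hTH Vn hVn hmain0 X0 hX0 Q hQmem hQid
    hQker hXX XT Uu hasym
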